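/- arXiv:1203.3209 — 2 statements merged into one kernel-verified Lean document; each statement's English description precedes it below -/
import Mathlib

section
/- (Necessary condition for uniqueness) Suppose a D-dimensional tensor B ∈ ℝ^{p_1×⋯×p_D} has rank R with factor matrices B_d = [β_d^{(1)},…,β_d^{(R)}] ∈ ℝ^{p_d×R}. If the rank-R decomposition B = Σ_{r=1}^R β_1^{(r)}∘⋯∘β_D^{(r)} is unique up to scaling and permutation, then min_{d=1,…,D} rank(B_1 ⊙ ⋯ ⊙ B_{d-1} ⊙ B_{d+1} ⊙ ⋯ ⊙ B_D) = R, which in turn implies that min_{d=1,…,D} ∏_{d'≠d} rank(B_{d'}) ≥ R. -/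
open scoped BigOperators

/-- The tensor `⟦B_1,…,B_D⟧ = Σ_{r=1}^R β_1^{(r)} ∘ ⋯ ∘ β_D^{(r)}` built from factor
matrices `B_d ∈ ℝ^{p_d×R}`, with entries `Σ_r ∏_d B_d(i_d, r)`. -/
def cpTensor {D : ℕ} (p : Fin D → ℕ) (R : ℕ)
    (B : (d : Fin D) → Matrix (Fin (p d)) (Fin R) ℝ) :
    ((d : Fin D) → Fin (p d)) → ℝ :=
  fun i => ∑ r : Fin R, ∏ d : Fin D, B d (i d) r

/-- A tensor has rank `R` if it is a sum of `R` outer products and cannot be written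
as a sum of fewer than `R` outer products. -/
def tensorHasRank {D : ℕ} (p : Fin D → ℕ) (T : ((d : Fin D) → Fin (p d)) → ℝ)
    (R : ℕ) : Prop :=
  (∃ B : (d : Fin D) → Matrix (Fin (p d)) (Fin R) ℝ, cpTensor p R B = T) ∧
    ∀ R' < R, ¬ ∃ B : (d : Fin D) → Matrix (Fin (p d)) (Fin R') ℝ, cpTensor p R' B = T

/-- The rank-`R` decomposition with factor matrices `B_d` is unique up to scaling and
permutation: any other decomposition of the same tensor into `R` outer products agrees
with it after a common permutation `σ` of the ranks and scalings `λ_{d,r}` with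
`∏_d λ_{d,r} = 1`. -/
def uniqueUpToScalingPerm {D : ℕ} (p : Fin D → ℕ) (R : ℕ)
    (B : (d : Fin D) → Matrix (Fin (p d)) (Fin R) ℝ) : Prop :=
  ∀ A : (d : Fin D) → Matrix (Fin (p d)) (Fin R) ℝ,
    cpTensor p R A = cpTensor p R B →
    ∃ (σ : Equiv.Perm (Fin R)) (lam : Fin D → Fin R → ℝ),
      (∀ r : Fin R, ∏ d : Fin D, lam d r = 1) ∧
      ∀ (d : Fin D) (r : Fin R) (i : Fin (p d)), A d i (σ r) = lam d r * B d i r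

/-- The Khatri–Rao product `B_1 ⊙ ⋯ ⊙ B_{d-1} ⊙ B_{d+1} ⊙ ⋯ ⊙ B_D` of all factor
matrices except `B_d`: its `r`-th column is the columnwise Kronecker (outer) product of
the `r`-th columns `β_{d'}^{(r)}`, `d' ≠ d`, with rows indexed by the multi-indices of
the remaining modes. -/
def khatriRaoSkip {D : ℕ} (p : Fin D → ℕ) (R : ℕ)
    (B : (d : Fin D) → Matrix (Fin (p d)) (Fin R) ℝ) (d : Fin D) :
    Matrix ((d' : {x : Fin D // x ≠ d}) → Fin (p d'.1)) (Fin R) ℝ :=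
  Matrix.of fun j r => ∏ d' : {x : Fin D // x ≠ d}, B d'.1 (j d') r

/-!
Since the tensor has rank `R`, its decomposition is minimal, and minimality forces every
Khatri–Rao product `KR_d := ⊙_{d' ≠ d} B_{d'}` to have full column rank: the mode-`d`
unfolding of the tensor is `B_d KR_dᵀ`, so for `KR_d c = 0` with `c_{r₀} ≠ 0` the factor
`B_d - x cᵀ`, with `x = β_d^{(r₀)} / c_{r₀}`, gives the same tensor and has zero `r₀`-th
column, leaving `R - 1` outer products. The bound by `∏_{d' ≠ d} rank B_{d'}` follows from
rank factorizations `B_{d'} = P_{d'} Q_{d'}` and the mixed-product rule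
`⊙ (P_i Q_i) = (⊗ P_i)(⊙ Q_i)`.
-/

namespace Matrix

variable {K : Type*} [Field K] {m n : Type*}

theorem exists_mulVec_eq_zero_of_rank_lt [Fintype n] {M : Matrix m n K}
    (h : M.rank < Fintype.card n) : ∃ c ≠ 0, M *ᵥ c = 0 := by
  by_contra! hker
  have hinj : Function.Injective M.mulVecLin :=
    (injective_iff_map_eq_zero _).2 fun c hc => not_not.1 fun hne => hker c hne hc
  have hrange := LinearMap.finrank_range_of_inj hinj
  rw [Module.finrank_fintype_fun_eq_card] at hrange
  exact h.ne hrange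

theorem exists_eq_mul_of_rank [Fintype n] (M : Matrix m n K) :
    ∃ (P : Matrix m (Fin M.rank) K) (Q : Matrix (Fin M.rank) n K), M = P * Q := by
  let V := Submodule.span K (Set.range M.col)
  have : FiniteDimensional K V := FiniteDimensional.span_of_finite K (Set.finite_range _)
  let b : Module.Basis (Fin M.rank) K V :=
    (Module.finBasis K V).reindex (finCongr M.rank_eq_finrank_span_cols.symm)
  have hcol : ∀ r, M.col r ∈ V := fun r => Submodule.subset_span ⟨r, rfl⟩
  refine ⟨of fun i s => (b s : m → K) i, of fun s r => b.repr ⟨M.col r, hcol r⟩ s, ?_⟩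
  ext i r
  have h := congrFun (congrArg Subtype.val (b.sum_repr ⟨M.col r, hcol r⟩)) i
  simp only [Submodule.coe_sum, SetLike.val_smul, Finset.sum_apply, Pi.smul_apply,
    smul_eq_mul] at h
  exact h.symm.trans (Finset.sum_congr rfl fun s _ => mul_comm _ _)

variable {ι : Type*} [Fintype ι] {m k : ι → Type*} [∀ i, Fintype (k i)]

def khatriRao (B : ∀ i, Matrix (m i) n K) : Matrix (∀ i, m i) n K :=
  of fun j r => ∏ i, B i (j i) r

def kroneckerPi (P : ∀ i, Matrix (m i) (k i) K) : Matrix (∀ i, m i) (∀ i, k i) K :=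
  of fun j s => ∏ i, P i (j i) (s i)

theorem khatriRao_mul [DecidableEq ι] (P : ∀ i, Matrix (m i) (k i) K)
    (Q : ∀ i, Matrix (k i) n K) :
    khatriRao (fun i => P i * Q i) = kroneckerPi P * khatriRao Q := by
  ext j r
  simp only [khatriRao, kroneckerPi, mul_apply, of_apply, Finset.prod_univ_sum,
    Fintype.piFinset_univ, Finset.prod_mul_distrib]

theorem rank_khatriRao_le [DecidableEq ι] [Fintype n] (B : ∀ i, Matrix (m i) n K) :
    (khatriRao B).rank ≤ ∏ i, (B i).rank := by
  choose P Q hPQ using fun i => (B i).exists_eq_mul_of_rank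
  calc (khatriRao B).rank
      = (kroneckerPi P * khatriRao Q).rank := by rw [← khatriRao_mul, ← funext hPQ]
    _ ≤ (kroneckerPi P).rank := rank_mul_le_left _ _
    _ ≤ ∏ i, (B i).rank := by simpa using rank_le_card_width (kroneckerPi P)

end Matrix

open Matrix

section CPDecomposition

variable {D R : ℕ} {p : Fin D → ℕ}

theorem khatriRaoSkip_eq_khatriRao (B : (d : Fin D) → Matrix (Fin (p d)) (Fin R) ℝ)
    (d : Fin D) : khatriRaoSkip p R B d = khatriRao fun d' : {x // x ≠ d} => B d'.1 :=
  rfl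

theorem khatriRaoSkip_update_self (B : (d : Fin D) → Matrix (Fin (p d)) (Fin R) ℝ)
    (d : Fin D) (A : Matrix (Fin (p d)) (Fin R) ℝ) :
    khatriRaoSkip p R (Function.update B d A) d = khatriRaoSkip p R B d := by
  ext j r
  simp only [khatriRaoSkip, of_apply]
  exact Finset.prod_congr rfl fun d' _ => by rw [Function.update_of_ne d'.2]

theorem cpTensor_apply_eq_sum_mul_khatriRaoSkip
    (B : (d : Fin D) → Matrix (Fin (p d)) (Fin R) ℝ) (d : Fin D) (i : ∀ d, Fin (p d)) :
    cpTensor p R B i = ∑ r, B d (i d) r * khatriRaoSkip p R B d (fun d' => i d'.1) r :=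
  Finset.sum_congr rfl fun _ _ => Fintype.prod_eq_mul_prod_subtype_ne _ d

theorem cpTensor_update_sub_vecMulVec {B : (d : Fin D) → Matrix (Fin (p d)) (Fin R) ℝ}
    {d : Fin D} {c : Fin R → ℝ} (hc : khatriRaoSkip p R B d *ᵥ c = 0)
    (x : Fin (p d) → ℝ) :
    cpTensor p R (Function.update B d (B d - vecMulVec x c)) = cpTensor p R B := by
  funext i
  have hci := congrFun hc fun d' => i d'.1
  simp only [mulVec, dotProduct, Pi.zero_apply] at hci
  rw [cpTensor_apply_eq_sum_mul_khatriRaoSkip _ d, cpTensor_apply_eq_sum_mul_khatriRaoSkip _ d,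
    khatriRaoSkip_update_self]
  simp only [Function.update_self, Matrix.sub_apply, vecMulVec_apply, sub_mul,
    Finset.sum_sub_distrib]
  rw [sub_eq_self, ← mul_zero (x (i d)), ← hci, Finset.mul_sum]
  exact Finset.sum_congr rfl fun r _ => by ring

theorem cpTensor_eq_of_col_eq_zero (B : (d : Fin D) → Matrix (Fin (p d)) (Fin (R + 1)) ℝ)
    {d : Fin D} {r₀ : Fin (R + 1)} (h : ∀ i, B d i r₀ = 0) :
    cpTensor p R (fun d => (B d).submatrix id r₀.succAbove) = cpTensor p (R + 1) B := by
  funext i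
  simp only [cpTensor, Fin.sum_univ_succAbove _ r₀, submatrix_apply, id]
  rw [Finset.prod_eq_zero (Finset.mem_univ d) (h (i d)), zero_add]

theorem exists_shorter_cpTensor_of_rank_khatriRaoSkip_lt
    {B : (d : Fin D) → Matrix (Fin (p d)) (Fin R) ℝ} {d : Fin D}
    (h : (khatriRaoSkip p R B d).rank < R) :
    ∃ R' < R, ∃ A : (d : Fin D) → Matrix (Fin (p d)) (Fin R') ℝ,
      cpTensor p R' A = cpTensor p R B := by
  obtain ⟨c, hc0, hc⟩ := exists_mulVec_eq_zero_of_rank_lt (h.trans_eq (Fintype.card_fin R).symm)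
  obtain ⟨r₀, hr₀⟩ := Function.ne_iff.mp hc0
  obtain ⟨R, rfl⟩ : ∃ R', R = R' + 1 := ⟨R - 1, by omega⟩
  set A := Function.update B d (B d - vecMulVec (fun i => B d i r₀ / c r₀) c)
  have hA : ∀ i, A d i r₀ = 0 := fun i => by
    simp [A, vecMulVec_apply, div_mul_cancel₀ _ hr₀]
  exact ⟨R, R.lt_succ_self, _,
    (cpTensor_eq_of_col_eq_zero A hA).trans (cpTensor_update_sub_vecMulVec hc _)⟩

theorem rank_khatriRaoSkip_of_tensorHasRank {B : (d : Fin D) → Matrix (Fin (p d)) (Fin R) ℝ}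
    (hrank : tensorHasRank p (cpTensor p R B) R) (d : Fin D) :
    (khatriRaoSkip p R B d).rank = R := by
  refine le_antisymm ((rank_le_card_width _).trans_eq (Fintype.card_fin R)) (not_lt.1 fun h => ?_)
  obtain ⟨R', hR', hA⟩ := exists_shorter_cpTensor_of_rank_khatriRaoSkip_lt h
  exact hrank.2 R' hR' hA

end CPDecomposition

theorem stmt10_general {D R : ℕ} (hD : 0 < D) (p : Fin D → ℕ)
    (B : (d : Fin D) → Matrix (Fin (p d)) (Fin R) ℝ)
    (hrank : tensorHasRank p (cpTensor p R B) R) :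
    (⨅ d : Fin D, (khatriRaoSkip p R B d).rank) = R ∧
    R ≤ ⨅ d : Fin D, ∏ d' : {x : Fin D // x ≠ d}, (B d'.1).rank := by
  have hKR := rank_khatriRaoSkip_of_tensorHasRank hrank
  have : Nonempty (Fin D) := ⟨⟨0, hD⟩⟩
  refine ⟨by simp only [hKR, ciInf_const], le_ciInf fun d => ?_⟩
  have hbound := rank_khatriRao_le fun d' : {x // x ≠ d} => B d'.1
  rwa [← khatriRaoSkip_eq_khatriRao, hKR] at hbound

/-- **Necessary condition for uniqueness of the CP decomposition.**
If the rank-`R` decomposition `B = Σ_{r=1}^R β_1^{(r)}∘⋯∘β_D^{(r)}` of a rank-`R` tensor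
is unique up to scaling and permutation, then
`min_{d} rank(B_1 ⊙ ⋯ ⊙ B_{d-1} ⊙ B_{d+1} ⊙ ⋯ ⊙ B_D) = R`, which in turn implies
`min_{d} ∏_{d'≠d} rank(B_{d'}) ≥ R`. -/
theorem stmt10 {D R : ℕ} (hD : 0 < D) (p : Fin D → ℕ)
    (B : (d : Fin D) → Matrix (Fin (p d)) (Fin R) ℝ)
    (hrank : tensorHasRank p (cpTensor p R B) R)
    (huniq : uniqueUpToScalingPerm p R B) :
    (⨅ d : Fin D, (khatriRaoSkip p R B d).rank) = R ∧
    R ≤ ⨅ d : Fin D, ∏ d' : {x : Fin D // x ≠ d}, (B d'.1).rank :=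
  stmt10_general hD p B hrank
end

section
/- (Global convergence of block relaxation) Let E_1,…,E_m be finite-dimensional real normed vector spaces and ℓ : E_1 × ⋯ × E_m → ℝ a differentiable objective function. Assume: (i) ℓ is continuous, bounded above, and coercive in the sense that the superlevel set {θ : ℓ(θ) ≥ ℓ(θ^{(0)})} is compact for the initial point θ^{(0)}; (ii) for each block index j and each fixed value of the other blocks, the function of the j-th block alone attains a unique maximizer (e.g., it is strictly concave); (iii) the stationary points of ℓ (points where the gradient of ℓ vanishes) are isolated. Let (θ^{(t)}) be the sequence generated by cyclically updating each block to the maximizer of ℓ over that block with the other blocks held at their current values. Then the sequence θ^{(t)} converges to a stationary point of ℓ. -/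
/-!
Each block update can only increase `ℓ`, so `ℓ (θ t)` increases to a limit and the iterates stay
in the compact superlevel set. At a limit point of the full sweeps, `ℓ` takes the same value at
the start and at the end of the sweep, and uniqueness of the block maximizers forces the sweep
to be constant; its point maximizes `ℓ` in every block, hence is stationary. In particular
consecutive iterates become arbitrarily close. A sequence with vanishing steps whose limit points
form a set of isolated points converges (Ostrowski): otherwise it would cross a small annulus
around one limit point infinitely often and produce another limit point inside it.
-/

open Filter Topology Function

theorem frequently_mem_Ioc_of_frequently_le_of_frequently_gt {f : ℕ → ℝ} {α η : ℝ}
    (hle : ∃ᶠ n in atTop, f n ≤ α) (hgt : ∃ᶠ n in atTop, α < f n)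
    (hstep : ∀ᶠ n in atTop, f (n + 1) ≤ f n + η) :
    ∃ᶠ n in atTop, f n ∈ Set.Ioc α (α + η) := by
  rw [frequently_atTop]
  intro N
  obtain ⟨N₀, hN₀⟩ := eventually_atTop.1 hstep
  obtain ⟨n, hn, hfn⟩ := frequently_atTop.1 hle (max N N₀)
  have hexit : ∃ k, α < f (n + k) := by
    obtain ⟨n', hn', hfn'⟩ := frequently_atTop.1 hgt n
    exact ⟨n' - n, by rwa [Nat.add_sub_cancel' hn']⟩
  -- `n + k` is the first exit from `(-∞, α]` after time `n`.
  set k := Nat.find hexit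
  have hk : k ≠ 0 := by
    intro hk
    have := Nat.find_spec hexit
    rw [show Nat.find hexit = 0 from hk, add_zero] at this
    linarith
  have hprev : f (n + (k - 1)) ≤ α := not_lt.1 (Nat.find_min hexit (by omega))
  have hjump := hN₀ (n + (k - 1)) (by omega)
  rw [show n + (k - 1) + 1 = n + k by omega] at hjump
  exact ⟨n + k, by omega, Nat.find_spec hexit, by linarith⟩

section Ostrowski

variable {X : Type*} [MetricSpace X] {u : ℕ → X} {S : Set X}

theorem eq_of_mapClusterPt_of_isolated
    (hsub : ∀ s : ℕ → ℕ, Tendsto s atTop atTop →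
      ∃ a ∈ S, MapClusterPt a atTop (u ∘ s))
    (hstep : Tendsto (fun n => dist (u (n + 1)) (u n)) atTop (𝓝 0))
    (hiso : ∀ a ∈ S, ∃ ε > 0, ∀ b ∈ S, dist b a < ε → b = a)
    {a b : X} (ha : a ∈ S) (hua : MapClusterPt a atTop u) (hub : MapClusterPt b atTop u) :
    b = a := by
  by_contra hne
  obtain ⟨ε, hε, hεa⟩ := hiso a ha
  set α := min ε (dist b a) / 3 with hα_def
  have hα : 0 < α := by have := dist_pos.2 hne; positivity
  have hle : ∃ᶠ n in atTop, dist (u n) a ≤ α :=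
    hua.frequently (Metric.closedBall_mem_nhds a hα)
  have hgt : ∃ᶠ n in atTop, α < dist (u n) a :=
    hub.frequently (p := fun y => α < dist y a) <|
      Filter.mem_of_superset (Metric.ball_mem_nhds b hα) fun y hy => by
        rw [Metric.mem_ball, dist_comm] at hy
        show α < dist y a
        linarith [dist_triangle b y a, min_le_right ε (dist b a)]
  have hsteps : ∀ᶠ n in atTop, dist (u (n + 1)) a ≤ dist (u n) a + α :=
    (hstep.eventually_lt_const hα).mono fun n hn => by
      linarith [dist_triangle (u (n + 1)) (u n) a]
  have hann := frequently_mem_Ioc_of_frequently_le_of_frequently_gt hle hgt hsteps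
  obtain ⟨s, hs, hsann⟩ := extraction_of_frequently_atTop hann
  obtain ⟨c, hcS, hc⟩ := hsub s hs.tendsto_atTop
  have hcann : dist c a ∈ Set.Icc α (α + α) :=
    (isClosed_Icc.preimage (continuous_id.dist continuous_const)).mem_of_mapClusterPt hc
      (Eventually.of_forall fun k => Set.Ioc_subset_Icc_self (hsann k))
  have hca : c = a := hεa c hcS (by linarith [hcann.2, min_le_left ε (dist b a)])
  rw [hca, dist_self] at hcann
  linarith [hcann.1]

theorem exists_tendsto_of_isolated_of_tendsto_dist_succ
    (hsub : ∀ s : ℕ → ℕ, Tendsto s atTop atTop →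
      ∃ a ∈ S, MapClusterPt a atTop (u ∘ s))
    (hstep : Tendsto (fun n => dist (u (n + 1)) (u n)) atTop (𝓝 0))
    (hiso : ∀ a ∈ S, ∃ ε > 0, ∀ b ∈ S, dist b a < ε → b = a) :
    ∃ a ∈ S, Tendsto u atTop (𝓝 a) := by
  obtain ⟨a, ha, hua⟩ := hsub id tendsto_id
  refine ⟨a, ha, tendsto_of_subseq_tendsto fun s hs => ?_⟩
  obtain ⟨b, -, hub⟩ := hsub s hs
  obtain ⟨τ, -, hτ⟩ := hub.tendsto_subseq
  rw [eq_of_mapClusterPt_of_isolated hsub hstep hiso ha hua (hub.of_comp hs)] at hτ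
  exact ⟨τ, hτ⟩

end Ostrowski

theorem fderiv_eq_zero_of_isLocalMax_update {ι : Type*} [Fintype ι] [DecidableEq ι]
    {E : ι → Type*} [∀ i, NormedAddCommGroup (E i)] [∀ i, NormedSpace ℝ (E i)]
    {f : (∀ i, E i) → ℝ} {a : ∀ i, E i} (hf : DifferentiableAt ℝ f a)
    (hmax : ∀ i, IsLocalMax (fun y => f (update a i y)) (a i)) :
    fderiv ℝ f a = 0 := by
  have hpartial : ∀ i (v : E i), fderiv ℝ f a (Pi.single i v) = 0 := by
    intro i v
    have hf' : HasFDerivAt f (fderiv ℝ f a) (update a i (a i)) := by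
      rw [update_eq_self]; exact hf.hasFDerivAt
    have hzero := (hmax i).hasFDerivAt_eq_zero (hf'.comp (a i) (hasFDerivAt_update a (a i)))
    have hsingle : ContinuousLinearMap.pi (Pi.single i (.id ℝ (E i))) v = Pi.single i v := by
      ext k
      rcases eq_or_ne k i with rfl | hk <;> simp [*]
    rw [← hsingle, ← ContinuousLinearMap.comp_apply, hzero, zero_apply]
  ext v
  rw [← Finset.univ_sum_single v, map_sum, zero_apply]
  exact Finset.sum_eq_zero fun i _ => hpartial i (v i)

section BlockRelaxation

variable {m : ℕ} {E : Fin m → Type*}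

/-- `p 0, …, p m` are the successive states of one sweep: block `j` is updated between
`p j.castSucc` and `p j.succ`. -/
def IsBlockSweep (ℓ : (∀ j, E j) → ℝ) (p : Fin (m + 1) → ∀ j, E j) : Prop :=
  ∀ j : Fin m, (∀ k ≠ j, p j.succ k = p j.castSucc k) ∧
    ∀ y : E j, ℓ (update (p j.castSucc) j y) ≤ ℓ (p j.succ)

structure IsBlockRelaxation (ℓ : (∀ j, E j) → ℝ) (φ : ℕ → Fin (m + 1) → ∀ j, E j) : Prop where
  isBlockSweep : ∀ t, IsBlockSweep ℓ (φ t)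
  succ_zero : ∀ t, φ (t + 1) 0 = φ t (Fin.last m)

def SubsingletonBlockMaximizers (ℓ : (∀ j, E j) → ℝ) : Prop :=
  ∀ j θ, {x : E j | ∀ y, ℓ (update θ j y) ≤ ℓ (update θ j x)}.Subsingleton

variable {ℓ : (∀ j, E j) → ℝ}

theorem isClosed_setOf_isBlockSweep [∀ j, TopologicalSpace (E j)] [∀ j, T2Space (E j)]
    (hℓ : Continuous ℓ) : IsClosed {p : Fin (m + 1) → ∀ j, E j | IsBlockSweep ℓ p} := by
  simp only [IsBlockSweep, Set.ofPred_forall, Set.ofPred_and]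
  refine isClosed_iInter fun j => .inter
    (isClosed_iInter fun k => isClosed_iInter fun _ => isClosed_eq (by fun_prop) (by fun_prop))
    (isClosed_iInter fun y => isClosed_le ?_ (by fun_prop))
  exact hℓ.comp ((continuous_apply _).update j continuous_const)

namespace IsBlockSweep

variable {p : Fin (m + 1) → ∀ j, E j}

theorem monotone (hp : IsBlockSweep ℓ p) : Monotone (ℓ ∘ p) :=
  Fin.monotone_iff_le_succ.2 fun j => by simpa using (hp j).2 (p j.castSucc j)

theorem succ_eq_castSucc (hp : IsBlockSweep ℓ p) (huniq : SubsingletonBlockMaximizers ℓ) {j : Fin m}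
    (hℓ : ℓ (p j.succ) ≤ ℓ (p j.castSucc)) : p j.succ = p j.castSucc := by
  set q := p j.castSucc
  have hsucc : update q j (p j.succ j) = p j.succ :=
    update_eq_iff.2 ⟨rfl, fun k hk => ((hp j).1 k hk).symm⟩
  have hmax_succ : ∀ y, ℓ (update q j y) ≤ ℓ (update q j (p j.succ j)) := by
    rw [hsucc]; exact (hp j).2
  have hmax_castSucc : ∀ y, ℓ (update q j y) ≤ ℓ (update q j (q j)) := by
    rw [update_eq_self]; exact fun y => ((hp j).2 y).trans hℓ
  rw [← hsucc, huniq j q hmax_succ hmax_castSucc, update_eq_self]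

theorem eq_zero (hp : IsBlockSweep ℓ p) (huniq : SubsingletonBlockMaximizers ℓ)
    (hℓ : ℓ (p (Fin.last m)) ≤ ℓ (p 0)) (i : Fin (m + 1)) : p i = p 0 := by
  induction i using Fin.induction with
  | zero => rfl
  | succ j ih =>
    rw [hp.succ_eq_castSucc huniq ?_, ih]
    calc ℓ (p j.succ) ≤ ℓ (p (Fin.last m)) := hp.monotone (Fin.le_last _)
      _ ≤ ℓ (p 0) := hℓ
      _ ≤ ℓ (p j.castSucc) := hp.monotone (Fin.zero_le _)

theorem update_zero_le (hp : IsBlockSweep ℓ p) (hconst : ∀ i, p i = p 0) (j : Fin m) (y : E j) :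
    ℓ (update (p 0) j y) ≤ ℓ (p 0) := by
  simpa only [hconst] using (hp j).2 y

end IsBlockSweep

namespace IsBlockRelaxation

variable {φ : ℕ → Fin (m + 1) → ∀ j, E j}

theorem monotone_apply_zero (hφ : IsBlockRelaxation ℓ φ) : Monotone fun t => ℓ (φ t 0) :=
  monotone_nat_of_le_succ fun t => by
    rw [hφ.succ_zero]; exact (hφ.isBlockSweep t).monotone (Fin.zero_le _)

theorem le_apply (hφ : IsBlockRelaxation ℓ φ) (t : ℕ) (i : Fin (m + 1)) :
    ℓ (φ 0 0) ≤ ℓ (φ t i) :=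
  (hφ.monotone_apply_zero (Nat.zero_le t)).trans ((hφ.isBlockSweep t).monotone (Fin.zero_le i))

theorem mem_univ_pi_setOf_le (hφ : IsBlockRelaxation ℓ φ) (t : ℕ) :
    φ t ∈ Set.univ.pi fun _ => {x | ℓ (φ 0 0) ≤ ℓ x} :=
  fun i _ => hφ.le_apply t i

variable [∀ j, TopologicalSpace (E j)] [∀ j, T2Space (E j)]

/-- Both ends of a limiting sweep have value `⨆ t, ℓ (φ t 0)`. -/
theorem isBlockSweep_and_eq_zero_of_mapClusterPt (hφ : IsBlockRelaxation ℓ φ)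
    (hℓ : Continuous ℓ) (hK : IsCompact {x | ℓ (φ 0 0) ≤ ℓ x})
    (huniq : SubsingletonBlockMaximizers ℓ)
    {A : Fin (m + 1) → ∀ j, E j} (hA : MapClusterPt A atTop φ) :
    IsBlockSweep ℓ A ∧ ∀ i, A i = A 0 := by
  have hA_sweep : IsBlockSweep ℓ A :=
    (isClosed_setOf_isBlockSweep hℓ).mem_of_mapClusterPt hA (.of_forall hφ.isBlockSweep)
  refine ⟨hA_sweep, hA_sweep.eq_zero huniq ?_⟩
  have hbdd : BddAbove (Set.range fun t => ℓ (φ t 0)) :=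
    (hK.bddAbove_image hℓ.continuousOn).mono <| Set.range_subset_iff.2 fun t =>
      Set.mem_image_of_mem ℓ (hφ.le_apply t 0)
  set L := ⨆ t, ℓ (φ t 0)
  have hlast : A ∈ {p | ℓ (p (Fin.last m)) ≤ L} :=
    (isClosed_le (by fun_prop) continuous_const).mem_of_mapClusterPt hA
      (.of_forall fun t => by
        rw [Set.mem_ofPred_eq, ← hφ.succ_zero]
        exact le_ciSup hbdd (t + 1))
  have hzero : L ≤ ℓ (A 0) := ciSup_le fun t₀ =>
    show A ∈ {p | ℓ (φ t₀ 0) ≤ ℓ (p 0)} from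
    (isClosed_le continuous_const (by fun_prop)).mem_of_mapClusterPt hA
      (eventually_atTop.2 ⟨t₀, fun _ ht => hφ.monotone_apply_zero ht⟩)
  exact hlast.trans hzero

theorem exists_mapClusterPt_update_le (hφ : IsBlockRelaxation ℓ φ) (hℓ : Continuous ℓ)
    (hK : IsCompact {x | ℓ (φ 0 0) ≤ ℓ x}) (huniq : SubsingletonBlockMaximizers ℓ)
    {s : ℕ → ℕ} (hs : Tendsto s atTop atTop) :
    ∃ a, (∀ j y, ℓ (update a j y) ≤ ℓ a) ∧ MapClusterPt a atTop fun t => φ (s t) 0 := by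
  obtain ⟨A, -, hA⟩ := (isCompact_univ_pi fun _ => hK).exists_mapClusterPt
    (f := atTop) (u := φ ∘ s)
    (tendsto_principal.2 (.of_forall fun t => hφ.mem_univ_pi_setOf_le (s t)))
  obtain ⟨hA_sweep, hA_const⟩ :=
    hφ.isBlockSweep_and_eq_zero_of_mapClusterPt hℓ hK huniq (hA.of_comp hs)
  exact ⟨A 0, hA_sweep.update_zero_le hA_const,
    hA.continuousAt_comp (continuous_apply 0).continuousAt⟩

end IsBlockRelaxation

theorem IsBlockRelaxation.tendsto_dist_succ_zero [∀ j, MetricSpace (E j)]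
    {φ : ℕ → Fin (m + 1) → ∀ j, E j} (hφ : IsBlockRelaxation ℓ φ) (hℓ : Continuous ℓ)
    (hK : IsCompact {x | ℓ (φ 0 0) ≤ ℓ x}) (huniq : SubsingletonBlockMaximizers ℓ) :
    Tendsto (fun t => dist (φ (t + 1) 0) (φ t 0)) atTop (𝓝 0) := by
  have hconst : Tendsto φ atTop (𝓝ˢ {A | ∀ i, A i = A 0}) :=
    (isCompact_univ_pi fun _ => hK).tendsto_nhdsSet_of_mapClusterPt
      (.of_forall hφ.mem_univ_pi_setOf_le)
      fun _ _ hA => (hφ.isBlockSweep_and_eq_zero_of_mapClusterPt hℓ hK huniq hA).2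
  simp only [hφ.succ_zero]
  refine (Continuous.tendsto_nhdsSet_nhds
    (f := fun A : Fin (m + 1) → ∀ j, E j => dist (A (Fin.last m)) (A 0)) (by fun_prop)
    fun A hA => ?_).comp hconst
  simp [hA (Fin.last m)]

end BlockRelaxation

theorem stmt17_general (m : ℕ) (E : Fin m → Type*)
    [∀ j, NormedAddCommGroup (E j)] [∀ j, NormedSpace ℝ (E j)]
    (ℓ : ((j : Fin m) → E j) → ℝ)
    (hdiff : Differentiable ℝ ℓ)
    (θ : ℕ → (j : Fin m) → E j)
    (hcoercive : IsCompact {θ' : (j : Fin m) → E j | ℓ (θ 0) ≤ ℓ θ'})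
    (hunique : ∀ (j : Fin m) (θ' : (j : Fin m) → E j),
      ∃! x : E j, ∀ y : E j,
        ℓ (Function.update θ' j y) ≤ ℓ (Function.update θ' j x))
    (hisolated : ∀ θ₁ : (j : Fin m) → E j, fderiv ℝ ℓ θ₁ = 0 →
      ∃ ε > 0, ∀ θ₂ : (j : Fin m) → E j,
        fderiv ℝ ℓ θ₂ = 0 → dist θ₂ θ₁ < ε → θ₂ = θ₁)
    (φ : ℕ → Fin (m + 1) → (j : Fin m) → E j)
    (hφ0 : ∀ t, φ t 0 = θ t)
    (hφlast : ∀ t, φ t (Fin.last m) = θ (t + 1))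
    (hupdate : ∀ (t : ℕ) (j : Fin m),
      (∀ k : Fin m, k ≠ j → φ t j.succ k = φ t j.castSucc k) ∧
      (∀ y : E j, ℓ (Function.update (φ t j.castSucc) j y) ≤ ℓ (φ t j.succ))) :
    ∃ θlim : (j : Fin m) → E j,
      Filter.Tendsto θ Filter.atTop (nhds θlim) ∧ fderiv ℝ ℓ θlim = 0 := by
  have hφ : IsBlockRelaxation ℓ φ := ⟨hupdate, fun t => by rw [hφ0, hφlast]⟩
  have hK : IsCompact {x | ℓ (φ 0 0) ≤ ℓ x} := by rwa [hφ0]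
  have huniq : SubsingletonBlockMaximizers ℓ := fun j θ' _ hx _ hy => (hunique j θ').unique hx hy
  obtain rfl : θ = fun t => φ t 0 := funext fun t => (hφ0 t).symm
  have hsub (s : ℕ → ℕ) (hs : Tendsto s atTop atTop) :
      ∃ a ∈ {x | fderiv ℝ ℓ x = 0}, MapClusterPt a atTop ((fun t => φ t 0) ∘ s) := by
    obtain ⟨a, hmax, ha⟩ := hφ.exists_mapClusterPt_update_le hdiff.continuous hK huniq hs
    refine ⟨a, fderiv_eq_zero_of_isLocalMax_update (hdiff a) fun j => ?_, ha⟩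
    exact IsMaxOn.isLocalMax (fun y _ => by rw [update_eq_self]; exact hmax j y) univ_mem
  obtain ⟨a, ha, hlim⟩ := exists_tendsto_of_isolated_of_tendsto_dist_succ hsub
    (hφ.tendsto_dist_succ_zero hdiff.continuous hK huniq) hisolated
  exact ⟨a, hlim, ha⟩

/-- **Global convergence of the block relaxation (cyclic block ascent) algorithm.**
Let `ℓ` be a differentiable objective on a finite product of finite-dimensional real
normed spaces `E_1 × ⋯ × E_m`.  Assume (i) `ℓ` is continuous, bounded above, and coercive
(the superlevel set of the initial point is compact); (ii) each block update has a unique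
maximizer; (iii) the stationary points of `ℓ` are isolated.  If `θ^{(t)}` is generated by
cyclically updating each block to the maximizer of `ℓ` over that block with the other
blocks held fixed (the intermediate states being `φ t 0 = θ^{(t)}, …, φ t m = θ^{(t+1)}`),
then `θ^{(t)}` converges to a stationary point of `ℓ`. -/
theorem stmt17 (m : ℕ) (E : Fin m → Type*)
    [∀ j, NormedAddCommGroup (E j)] [∀ j, NormedSpace ℝ (E j)]
    [∀ j, FiniteDimensional ℝ (E j)]
    (ℓ : ((j : Fin m) → E j) → ℝ)
    (hdiff : Differentiable ℝ ℓ)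
    (hcont : Continuous ℓ)
    (hbdd : BddAbove (Set.range ℓ))
    (θ : ℕ → (j : Fin m) → E j)
    (hcoercive : IsCompact {θ' : (j : Fin m) → E j | ℓ (θ 0) ≤ ℓ θ'})
    (hunique : ∀ (j : Fin m) (θ' : (j : Fin m) → E j),
      ∃! x : E j, ∀ y : E j,
        ℓ (Function.update θ' j y) ≤ ℓ (Function.update θ' j x))
    (hisolated : ∀ θ₁ : (j : Fin m) → E j, fderiv ℝ ℓ θ₁ = 0 →
      ∃ ε > 0, ∀ θ₂ : (j : Fin m) → E j,
        fderiv ℝ ℓ θ₂ = 0 → dist θ₂ θ₁ < ε → θ₂ = θ₁)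
    (φ : ℕ → Fin (m + 1) → (j : Fin m) → E j)
    (hφ0 : ∀ t, φ t 0 = θ t)
    (hφlast : ∀ t, φ t (Fin.last m) = θ (t + 1))
    (hupdate : ∀ (t : ℕ) (j : Fin m),
      (∀ k : Fin m, k ≠ j → φ t j.succ k = φ t j.castSucc k) ∧
      (∀ y : E j, ℓ (Function.update (φ t j.castSucc) j y) ≤ ℓ (φ t j.succ))) :
    ∃ θlim : (j : Fin m) → E j,
      Filter.Tendsto θ Filter.atTop (nhds θlim) ∧ fderiv ℝ ℓ θlim = 0 :=
  stmt17_general m E ℓ hdiff θ hcoercive hunique hisolated φ hφ0 hφlast hupdate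
end
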